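/- arXiv:1808.10719 — 3 statements merged into one kernel-verified Lean document; each statement's English description precedes it below -/
import Mathlib

section
/- Let R be a commutative ring, A an R-module, and x_1,...,x_p elements of R. The sequence x_1,...,x_p is A-regular if and only if for all 1 ≤ k ≤ p, the Koszul complex K(x_1,...,x_k; A) is a left resolution of A/(x_1,...,x_k)A (i.e. has vanishing homology in all negative degrees). -/
open RingTheory.Sequence

/-!
Splitting off the last index exhibits `K(x_1,…,x_{k+1}; A)` as the mapping cone of
multiplication by `x_{k+1}` on `K(x_1,…,x_k; A)`: a chain is the pair of its components on the
subsets avoiding and containing `k+1`, and the differential becomes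
`(u, v) ↦ (d u ± x_{k+1} v, d v)`. If `K(x_1,…,x_k; A)` is exact in negative degrees, a diagram
chase in the cone shows that so is `K(x_1,…,x_{k+1}; A)` as soon as `x_{k+1}` is a
nonzerodivisor on its `H^0 = A/(x_1,…,x_k)A`; conversely, exactness of `K(x_1,…,x_{k+1}; A)` in
degree `-1` alone forces `x_{k+1}` to be a nonzerodivisor on `A/(x_1,…,x_k)A`. Induction on `k`.
-/

variable {R : Type*} [CommRing R] {A : Type*} [AddCommGroup A] [Module R A]

/-- The module of `q`-chains of the Koszul complex `K(x_1,...,x_k; A)` associated to a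
list `x` of elements of `R` and the `R`-module `A`: the direct sum of copies of `A`
indexed by the subsets of `{1,...,k}` of cardinality `q` (this is the usual description
of `Λ^q R^k ⊗ A` in the standard basis). It sits in (cohomological) degree `-q`. -/
def koszulChains (x : List R) (A : Type*) [AddCommGroup A] [Module R A] (q : ℕ) : Type _ :=
  {S : Finset (Fin x.length) // S.card = q} → A

noncomputable instance (x : List R) (q : ℕ) : AddCommGroup (koszulChains x A q) :=
  inferInstanceAs (AddCommGroup ({S : Finset (Fin x.length) // S.card = q} → A))

/-- The Koszul differential `K_{q+1} → K_q` of the Koszul complex `K(x; A)`: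
`(d f)(T) = Σ_{i ∉ T} (-1)^{#{j ∈ T | j < i}} x_i • f(T ∪ {i})`. -/
noncomputable def koszulDiff (x : List R) (q : ℕ)
    (f : koszulChains x A (q + 1)) : koszulChains x A q :=
  fun T => ∑ i ∈ T.1ᶜ.attach,
    ((-1 : ℤ) ^ (T.1.filter (fun j => j < i.1)).card) •
      (x.get i.1 • f ⟨insert i.1 T.1, by
        rw [Finset.card_insert_of_notMem (Finset.mem_compl.mp i.2), T.2]⟩)

lemma Ideal.ofList_ofFn {n : ℕ} (c : Fin n → R) :
    Ideal.ofList (List.ofFn c) = Ideal.span (Set.range c) :=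
  congrArg Ideal.span (Set.ext fun r => List.mem_ofFn' c r)

lemma Ideal.mem_span_range_smul_top_iff {n : ℕ} (c : Fin n → R) (m : A) :
    m ∈ Ideal.span (Set.range c) • (⊤ : Submodule R A) ↔ ∃ v : Fin n → A, ∑ i, c i • v i = m := by
  constructor
  · intro hm
    refine Submodule.smul_induction_on hm (fun r hr x _ => ?smul) ?add
    case smul =>
      obtain ⟨a, rfl⟩ := Ideal.mem_span_range_iff_exists_fun.mp hr
      exact ⟨fun i => a i • x, by simp [Finset.sum_smul, smul_smul, mul_comm]⟩
    case add =>
      rintro _ _ ⟨v, rfl⟩ ⟨w, rfl⟩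
      exact ⟨v + w, by simp [smul_add, Finset.sum_add_distrib]⟩
  · rintro ⟨v, rfl⟩
    exact Submodule.sum_mem _ fun i _ =>
      Submodule.smul_mem_smul (Ideal.subset_span ⟨i, rfl⟩) Submodule.mem_top

namespace Koszul

open Finset

variable (A) in
/-- The chains of `koszulChains`, indexed by `Fin n` instead of a list so that one can induct
on `n`. -/
abbrev Chains (n q : ℕ) : Type _ := {S : Finset (Fin n) // S.card = q} → A

variable {n q : ℕ}

/-- A chain extended by zero to subsets of the wrong cardinality, so that formulas need no
cardinality proofs. -/
def eval (f : Chains A n q) (U : Finset (Fin n)) : A :=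
  if h : U.card = q then f ⟨U, h⟩ else 0

lemma eval_of_card (f : Chains A n q) {U : Finset (Fin n)} (h : U.card = q) :
    eval f U = f ⟨U, h⟩ :=
  dif_pos h

lemma eval_zero (U : Finset (Fin n)) : eval (0 : Chains A n q) U = 0 := by
  unfold eval; split_ifs <;> rfl

lemma eval_add (f g : Chains A n q) (U : Finset (Fin n)) :
    eval (f + g) U = eval f U + eval g U := by
  unfold eval; split_ifs <;> simp

lemma eval_smul (r : R) (f : Chains A n q) (U : Finset (Fin n)) :
    eval (r • f) U = r • eval f U := by
  unfold eval; split_ifs <;> simp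

noncomputable def d (c : Fin n → R) (q : ℕ) : Chains A n (q + 1) →ₗ[R] Chains A n q where
  toFun f T := ∑ i ∈ T.1ᶜ, (-1 : ℤ) ^ #{j ∈ T.1 | j < i} • c i • eval f (insert i T.1)
  map_add' f g := by
    ext T
    simp [eval_add, smul_add, sum_add_distrib]
  map_smul' r f := by
    ext T
    simp [eval_smul, smul_sum, smul_comm r]

lemma d_apply (c : Fin n → R) (f : Chains A n (q + 1)) (T : {S : Finset (Fin n) // S.card = q}) :
    d c q f T = ∑ i ∈ T.1ᶜ, (-1 : ℤ) ^ #{j ∈ T.1 | j < i} • c i • eval f (insert i T.1) :=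
  rfl

lemma subsingleton_chains {M : Type*} (h : n < q) : Subsingleton (Chains M n q) :=
  have : IsEmpty {S : Finset (Fin n) // S.card = q} :=
    ⟨fun S => by have := S.1.card_le_univ; rw [S.2, Fintype.card_fin] at this; omega⟩
  inferInstance

lemma apply_eq_apply_empty {M : Type*} (f : Chains M n 0) (T : {S : Finset (Fin n) // S.card = 0}) :
    f T = f ⟨∅, card_empty⟩ :=
  congrArg f (Subtype.ext (card_eq_zero.mp T.2))

lemma d_zero_apply (c : Fin n → R) (f : Chains A n 1) (T : {S : Finset (Fin n) // S.card = 0}) :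
    d c 0 f T = ∑ i, c i • eval f {i} := by
  rw [apply_eq_apply_empty (d c 0 f) T, d_apply]
  simp

lemma mem_range_d_zero_iff (c : Fin n → R) (g : Chains A n 0) :
    g ∈ Set.range (d c 0) ↔ g ⟨∅, card_empty⟩ ∈ Ideal.span (Set.range c) • (⊤ : Submodule R A) := by
  rw [Ideal.mem_span_range_smul_top_iff]
  constructor
  · rintro ⟨f, rfl⟩
    exact ⟨fun i => eval f {i}, (d_zero_apply c f _).symm⟩
  · rintro ⟨v, hv⟩
    refine ⟨fun S => ∑ j ∈ S.1, v j, funext fun T => ?_⟩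
    rw [d_zero_apply, apply_eq_apply_empty g T, ← hv]
    simp [eval_of_card]

lemma last_notMem_map_castSuccEmb (S : Finset (Fin n)) : Fin.last n ∉ S.map Fin.castSuccEmb := by
  simp [Fin.castSucc_ne_last]

lemma compl_map_castSuccEmb (S : Finset (Fin n)) :
    (S.map Fin.castSuccEmb)ᶜ = insert (Fin.last n) (Sᶜ.map Fin.castSuccEmb) := by
  ext i
  induction i using Fin.lastCases <;> simp [Fin.castSucc_ne_last]

lemma compl_insert_last_map_castSuccEmb (S : Finset (Fin n)) :
    (insert (Fin.last n) (S.map Fin.castSuccEmb))ᶜ = Sᶜ.map Fin.castSuccEmb := by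
  rw [compl_insert, compl_map_castSuccEmb, erase_insert (last_notMem_map_castSuccEmb _)]

lemma card_filter_lt_castSuccEmb (S : Finset (Fin n)) (i : Fin n) :
    #{j ∈ S.map Fin.castSuccEmb | j < Fin.castSuccEmb i} = #{j ∈ S | j < i} := by
  rw [filter_map, card_map]
  rfl

lemma card_filter_insert_last_lt_castSuccEmb (T : Finset (Fin (n + 1))) (i : Fin n) :
    #{j ∈ insert (Fin.last n) T | j < Fin.castSuccEmb i} = #{j ∈ T | j < Fin.castSuccEmb i} := by
  have : ¬Fin.last n < Fin.castSuccEmb i := not_lt.2 (Fin.castSucc_lt_last i).le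
  rw [filter_insert, if_neg this]

lemma card_filter_lt_last (S : Finset (Fin n)) :
    #{j ∈ S.map Fin.castSuccEmb | j < Fin.last n} = #S := by
  simp [filter_map, Function.comp_def, Fin.castSucc_lt_last]

lemma card_insert_last_map_castSuccEmb (S : Finset (Fin n)) :
    #(insert (Fin.last n) (S.map Fin.castSuccEmb)) = #S + 1 := by
  rw [card_insert_of_notMem (last_notMem_map_castSuccEmb S), card_map]

noncomputable def preimageCastSucc (T : Finset (Fin (n + 1))) : Finset (Fin n) :=
  T.preimage Fin.castSucc (Fin.castSucc_injective n).injOn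

lemma preimageCastSucc_map (S : Finset (Fin n)) :
    preimageCastSucc (S.map Fin.castSuccEmb) = S := by
  ext i
  simp [preimageCastSucc]

lemma map_preimageCastSucc {T : Finset (Fin (n + 1))} (h : Fin.last n ∉ T) :
    (preimageCastSucc T).map Fin.castSuccEmb = T := by
  ext i
  induction i using Fin.lastCases <;> simp [preimageCastSucc, h, Fin.castSucc_ne_last]

def withoutLast (f : Chains A (n + 1) q) : Chains A n q :=
  fun S => eval f (S.1.map Fin.castSuccEmb)

def withLast (f : Chains A (n + 1) (q + 1)) : Chains A n q :=
  fun S => eval f (insert (Fin.last n) (S.1.map Fin.castSuccEmb))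

noncomputable def glue (g : Chains A n (q + 1)) (h : Chains A n q) : Chains A (n + 1) (q + 1) :=
  fun T =>
    if Fin.last n ∈ T.1 then
      eval h (preimageCastSucc (T.1.erase (Fin.last n)))
    else eval g (preimageCastSucc T.1)

lemma withoutLast_zero : withoutLast (0 : Chains A (n + 1) q) = 0 :=
  funext fun _ => eval_zero _

lemma withLast_zero : withLast (0 : Chains A (n + 1) (q + 1)) = 0 :=
  funext fun _ => eval_zero _

lemma eval_withoutLast (f : Chains A (n + 1) q) (U : Finset (Fin n)) :
    eval (withoutLast f) U = eval f (U.map Fin.castSuccEmb) := by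
  by_cases h : #U = q
  · rw [eval_of_card _ h]
    rfl
  · rw [eval, dif_neg h, eval, dif_neg (by rwa [card_map])]

lemma eval_withLast (f : Chains A (n + 1) (q + 1)) (U : Finset (Fin n)) :
    eval (withLast f) U = eval f (insert (Fin.last n) (U.map Fin.castSuccEmb)) := by
  by_cases h : #U = q
  · rw [eval_of_card _ h]
    rfl
  · rw [eval, dif_neg h, eval, dif_neg (by rw [card_insert_last_map_castSuccEmb]; omega)]

lemma withoutLast_glue (g : Chains A n (q + 1)) (h : Chains A n q) :
    withoutLast (glue g h) = g := by
  funext S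
  rw [withoutLast, eval_of_card _ ((card_map _).trans S.2), glue,
    if_neg (last_notMem_map_castSuccEmb _), preimageCastSucc_map, eval_of_card _ S.2]

lemma withLast_glue (g : Chains A n (q + 1)) (h : Chains A n q) : withLast (glue g h) = h := by
  funext S
  rw [withLast, eval_of_card _ (by rw [card_insert_last_map_castSuccEmb, S.2]), glue,
    if_pos (mem_insert_self _ _), erase_insert (last_notMem_map_castSuccEmb _),
    preimageCastSucc_map, eval_of_card _ S.2]

lemma glue_withoutLast_withLast (f : Chains A (n + 1) (q + 1)) :
    glue (withoutLast f) (withLast f) = f := by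
  funext T
  rw [glue]
  split_ifs with hT
  · rw [eval_withLast, map_preimageCastSucc (notMem_erase _ _), insert_erase hT,
      eval_of_card _ T.2]
  · rw [eval_withoutLast, map_preimageCastSucc hT, eval_of_card _ T.2]

lemma ext_withoutLast_withLast {f g : Chains A (n + 1) (q + 1)}
    (h₁ : withoutLast f = withoutLast g) (h₂ : withLast f = withLast g) : f = g := by
  rw [← glue_withoutLast_withLast f, h₁, h₂, glue_withoutLast_withLast]

lemma ext_withoutLast_zero {f g : Chains A (n + 1) 0} (h : withoutLast f = withoutLast g) :
    f = g := by
  funext T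
  have h₀ := congrFun h ⟨∅, card_empty⟩
  simp only [withoutLast, map_empty, eval_of_card _ card_empty] at h₀
  rw [apply_eq_apply_empty f T, apply_eq_apply_empty g T, h₀]

lemma withoutLast_d (c : Fin (n + 1) → R) (f : Chains A (n + 1) (q + 1)) :
    withoutLast (d c q f) =
      d (c ∘ Fin.castSucc) q (withoutLast f) + (-1 : ℤ) ^ q • c (Fin.last n) • withLast f := by
  funext S
  rw [withoutLast, eval_of_card _ ((card_map _).trans S.2), d_apply]
  dsimp only
  rw [compl_map_castSuccEmb,
    sum_insert (last_notMem_map_castSuccEmb _), sum_map, add_comm, Pi.add_apply, d_apply]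
  congr 1
  · refine sum_congr rfl fun i _ => ?_
    rw [card_filter_lt_castSuccEmb, eval_withoutLast, map_insert]
    rfl
  · rw [card_filter_lt_last, S.2]
    rfl

lemma withLast_d (c : Fin (n + 1) → R) (f : Chains A (n + 1) (q + 2)) :
    withLast (d c (q + 1) f) = d (c ∘ Fin.castSucc) q (withLast f) := by
  funext S
  rw [withLast, eval_of_card _ (by rw [card_insert_last_map_castSuccEmb, S.2]),
    d_apply]
  dsimp only
  rw [compl_insert_last_map_castSuccEmb, sum_map, d_apply]
  refine sum_congr rfl fun i _ => ?_
  rw [card_filter_insert_last_lt_castSuccEmb, card_filter_lt_castSuccEmb,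
    eval_withLast, map_insert, insert_comm]
  rfl

lemma d_d : ∀ {n : ℕ} (c : Fin n → R) (q : ℕ) (F : Chains A n (q + 2)),
    d c q (d c (q + 1) F) = 0
  | 0, c, q, F => by
    have := subsingleton_chains (M := A) (n := 0) (q := q + 2) (by omega)
    rw [Subsingleton.elim F 0, map_zero, map_zero]
  | n + 1, c, q, F => by
    have h₁ : withoutLast (d c q (d c (q + 1) F)) = 0 := by
      rw [withoutLast_d, withoutLast_d, withLast_d, map_add, map_zsmul, map_smul, d_d, zero_add,
        pow_succ, mul_neg_one, neg_smul, neg_add_cancel]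
    cases q with
    | zero => exact ext_withoutLast_zero (h₁.trans withoutLast_zero.symm)
    | succ q =>
      refine ext_withoutLast_withLast (h₁.trans withoutLast_zero.symm) ?_
      rw [withLast_d, withLast_d, d_d, withLast_zero]

variable (A) in
/-- `K(c; A)` is a left resolution of `A ⧸ (c) A`: it is exact in every negative degree. -/
def IsAcyclic (c : Fin n → R) : Prop :=
  ∀ q, Function.Exact (d (A := A) c (q + 1)) (d c q)

lemma isAcyclic_fin_zero (c : Fin 0 → R) : IsAcyclic A c := fun q f => by
  have := subsingleton_chains (M := A) (n := 0) (q := q + 1) (by omega)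
  exact ⟨fun _ => ⟨0, Subsingleton.elim _ _⟩, fun _ => by rw [Subsingleton.elim f 0, map_zero]⟩

lemma withLast_mem_range_of_d_eq_zero (c : Fin (n + 1) → R) (hc : IsAcyclic A (c ∘ Fin.castSucc))
    (hreg : IsSMulRegular (A ⧸ Ideal.span (Set.range (c ∘ Fin.castSucc)) • (⊤ : Submodule R A))
      (c (Fin.last n)))
    {f : Chains A (n + 1) (q + 1)} (hf : d c q f = 0) :
    withLast f ∈ Set.range (d (c ∘ Fin.castSucc) q) := by
  cases q with
  | zero =>
    have h₀ := congrFun (withoutLast_d c f) ⟨∅, card_empty⟩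
    rw [hf, withoutLast_zero, Pi.zero_apply, Pi.add_apply, pow_zero, one_smul, eq_comm,
      add_eq_zero_iff_neg_eq, Pi.smul_apply] at h₀
    rw [mem_range_d_zero_iff]
    refine (isSMulRegular_quotient_iff_mem_of_smul_mem _ _).mp hreg _ ?_
    rw [← h₀]
    exact neg_mem ((mem_range_d_zero_iff _ _).mp ⟨_, rfl⟩)
  | succ q => exact (hc q _).mp (by rw [← withLast_d, hf, withLast_zero])

theorem isAcyclic_of_isAcyclic_castSucc (c : Fin (n + 1) → R)
    (hc : IsAcyclic A (c ∘ Fin.castSucc))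
    (hreg : IsSMulRegular (A ⧸ Ideal.span (Set.range (c ∘ Fin.castSucc)) • (⊤ : Submodule R A))
      (c (Fin.last n))) :
    IsAcyclic A c := by
  intro q f
  refine ⟨fun hf => ?_, by rintro ⟨F, rfl⟩; exact d_d c q F⟩
  obtain ⟨h, hh⟩ := withLast_mem_range_of_d_eq_zero c hc hreg hf
  obtain ⟨g, hg⟩ := (hc q _).mp <|
    show d (c ∘ Fin.castSucc) q (withoutLast f + (-1 : ℤ) ^ q • c (Fin.last n) • h) = 0 by
      rw [map_add, map_zsmul, map_smul, hh, ← withoutLast_d, hf, withoutLast_zero]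
  refine ⟨glue g h, ext_withoutLast_withLast ?_ ?_⟩
  · rw [withoutLast_d, withoutLast_glue, withLast_glue, hg, pow_succ, mul_neg_one, neg_smul,
      add_neg_cancel_right]
  · rw [withLast_d, withLast_glue, hh]

theorem isSMulRegular_of_exact (c : Fin (n + 1) → R) (h : Function.Exact (d (A := A) c 1) (d c 0)) :
    IsSMulRegular (A ⧸ Ideal.span (Set.range (c ∘ Fin.castSucc)) • (⊤ : Submodule R A))
      (c (Fin.last n)) := by
  refine (isSMulRegular_quotient_iff_mem_of_smul_mem _ _).mpr fun m hm => ?_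
  obtain ⟨g, hg⟩ := (mem_range_d_zero_iff (c ∘ Fin.castSucc) fun _ => -(c (Fin.last n) • m)).mpr
    (neg_mem hm)
  obtain ⟨F, hF⟩ := (h (glue g fun _ => m)).mp <| ext_withoutLast_zero <| by
    rw [withoutLast_d, withoutLast_glue, withLast_glue, hg, withoutLast_zero]
    funext
    simp
  refine (mem_range_d_zero_iff (c ∘ Fin.castSucc) fun _ => m).mp ⟨withLast F, ?_⟩
  rw [← withLast_d, hF, withLast_glue]

lemma isAcyclic_congr {m m' : ℕ} (h : m = m') {c : Fin m → R} {c' : Fin m' → R}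
    (hc : ∀ i, c' (Fin.cast h i) = c i) : IsAcyclic A c ↔ IsAcyclic A c' := by
  subst h
  obtain rfl : c' = c := funext hc
  rfl

lemma isAcyclic_get_take_iff (xs : List R) {k : ℕ} (hk : k ≤ xs.length) :
    IsAcyclic A (xs.take k).get ↔ IsAcyclic A (xs.get ∘ Fin.castLE hk) :=
  isAcyclic_congr (by simpa using hk) fun i => by simp

lemma koszulDiff_eq_d (x : List R) (q : ℕ) : koszulDiff (A := A) x q = d x.get q := by
  funext f T
  rw [koszulDiff, d_apply (A := A) x.get f T, ← sum_attach T.1ᶜ]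
  refine sum_congr rfl fun i _ => ?_
  rw [eval_of_card (A := A) (f := f)]

lemma isAcyclic_get_iff (x : List R) :
    IsAcyclic A x.get ↔ ∀ q, Function.Exact (koszulDiff (A := A) x (q + 1)) (koszulDiff x q) := by
  simp only [koszulDiff_eq_d]
  rfl

theorem isWeaklyRegular_ofFn_iff : ∀ {n : ℕ} (c : Fin n → R),
    IsWeaklyRegular A (List.ofFn c) ↔ ∀ k (hk : k ≤ n), IsAcyclic A (c ∘ Fin.castLE hk)
  | 0, c => by
    rw [List.ofFn_zero]
    refine iff_of_true (IsWeaklyRegular.nil R A) fun k hk => ?_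
    obtain rfl : k = 0 := Nat.le_zero.mp hk
    exact isAcyclic_fin_zero _
  | n + 1, c => by
    rw [List.ofFn_succ', List.concat_eq_append, isWeaklyRegular_append_iff,
      isWeaklyRegular_singleton_iff, Ideal.ofList_ofFn, isWeaklyRegular_ofFn_iff]
    constructor
    · rintro ⟨hc, hreg⟩ k hk
      rcases hk.lt_or_eq with hk | rfl
      · exact hc k (by omega)
      · exact isAcyclic_of_isAcyclic_castSucc c (hc n le_rfl) hreg
    · intro hc
      exact ⟨fun k hk => hc k (hk.trans n.le_succ), isSMulRegular_of_exact c (hc (n + 1) le_rfl 0)⟩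

end Koszul

open Koszul in
/-- A sequence `x_1, ..., x_p` of elements of a commutative ring `R` is
`A`-regular if and only if for every `1 ≤ k ≤ p` the Koszul complex
`K(x_1,...,x_k; A)` (placed in degrees `-k, ..., 0`) is a left resolution of
`A/(x_1,...,x_k)A`, i.e. its homology vanishes in all negative degrees: the complex is
exact at `K_{q+1}` for every `q ≥ 0` (i.e. at `K_q` for every `q ≥ 1`). -/
theorem isWeaklyRegular_iff_koszul_left_resolution (xs : List R) :
    IsWeaklyRegular A xs ↔
      ∀ k : ℕ, 1 ≤ k → k ≤ xs.length →
        ∀ q : ℕ,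
          Function.Exact (koszulDiff (A := A) (xs.take k) (q + 1))
            (koszulDiff (A := A) (xs.take k) q) := by
  have h := isWeaklyRegular_ofFn_iff (A := A) xs.get
  rw [List.ofFn_get] at h
  rw [h]
  refine forall_congr' fun k => ⟨fun hac _ hk => ?_, fun hac hk => ?_⟩
  · exact (isAcyclic_get_iff _).mp ((isAcyclic_get_take_iff xs hk).mpr (hac hk))
  · rcases Nat.eq_zero_or_pos k with rfl | hk₀
    · exact isAcyclic_fin_zero _
    · exact (isAcyclic_get_take_iff xs hk).mp ((isAcyclic_get_iff _).mpr (hac hk₀ hk))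
end

section
/- Let R be a commutative ring, A an R-module, and x_1,...,x_p in R. The following are equivalent: (1) every permutation of the sequence x_1,...,x_p is A-regular; (2) every subsequence of x_1,...,x_p is A-regular. -/
open RingTheory.Sequence Submodule

/-- If every sublist of `xs` is weakly regular, then every subpermutation
(sublist of a permutation) of `xs` is weakly regular. -/
private lemma aux_subperm_regular {R : Type*} [CommRing R]
    {A : Type*} [AddCommGroup A] [Module R A] {xs : List R}
    (hsub : ∀ ys : List R, ys.Sublist xs → IsWeaklyRegular A ys) :
    ∀ (n : ℕ) (ys : List R), ys.length ≤ n → ys.Subperm xs → IsWeaklyRegular A ys := by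
  intro n
  induction n with
  | zero =>
    intro ys hlen _
    rw [List.length_eq_zero_iff.mp (Nat.le_zero.mp hlen)]
    exact .nil R A
  | succ n ih =>
    intro ys hlen hys
    obtain ⟨zs, hperm, hsl⟩ := hys
    refine (hsub zs hsl).prototype_perm hperm ?_
    intro a b rs' hsp K hK
    have h1 : (b :: rs').Subperm xs :=
      (((List.sublist_cons_self a _).subperm.trans hsp).trans hsl.subperm)
    have h2 : (rs' ++ [b]).Subperm xs :=
      (List.perm_append_singleton b rs').subperm.trans h1
    have hlen2 : (rs' ++ [b]).length ≤ n := by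
      have h1' := hsp.length_le
      rw [hperm.length_eq] at h1'
      simp only [List.length_append, List.length_cons, List.length_singleton, List.length_nil] at h1' ⊢
      omega
    have hreg := ih (rs' ++ [b]) hlen2 h2
    rw [isWeaklyRegular_append_iff, isWeaklyRegular_singleton_iff,
      isSMulRegular_iff_torsionBy_eq_bot] at hreg
    exact hreg.2

/-- Let `R` be a commutative ring, `A` an `R`-module and
`x_1, ..., x_p` elements of `R` (given as a list `xs`). The following are
equivalent: (1) every permutation of the sequence `x_1, ..., x_p` is
`A`-regular; (2) every subsequence of `x_1, ..., x_p` is `A`-regular. -/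
theorem perm_regular_iff_sublist_regular {R : Type*} [CommRing R]
    {A : Type*} [AddCommGroup A] [Module R A] (xs : List R) :
    (∀ ys : List R, ys.Perm xs → RingTheory.Sequence.IsWeaklyRegular A ys) ↔
      (∀ ys : List R, ys.Sublist xs → RingTheory.Sequence.IsWeaklyRegular A ys) := by
  classical
  constructor
  · intro h ys hys
    have hperm : (ys ++ xs.diff ys).Perm xs := by
      simpa using List.subperm_append_diff_self_of_count_le
        (fun a _ => hys.count_le a)
    have := h _ hperm
    rw [isWeaklyRegular_append_iff] at this
    exact this.1
  · intro h ys hys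
    exact aux_subperm_regular h ys.length ys le_rfl hys.subperm
end

section
/- Let (H, N) be a graded Lefschetz structure with Weil element w := e^{-ρ(X)} e^{ρ(Y)} e^{-ρ(X)}. A graded bilinear form k on H satisfying k(Nx,y) + k(x,Ny) = 0 is a polarization (i.e. k(·, N^ℓ ·) restricted to the primitive part P_ℓ H = ker(N^{ℓ+1} : H_ℓ → H_{-ℓ-2}) is symmetric positive definite for all ℓ ≥ 0) if and only if the bilinear form h(x,y) := k(x, w y) is symmetric positive definite on H. -/
variable {V : Type*} [AddCommGroup V] [Module ℝ V]

/-- The exponential of a (nilpotent) endomorphism of a finite-dimensional vector space,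
as the finite sum `∑_{k ≤ dim V} f^k / k!`. -/
noncomputable def expNil (f : Module.End ℝ V) : Module.End ℝ V :=
  ∑ k ∈ Finset.range (Module.finrank ℝ V + 1), ((k.factorial : ℝ)⁻¹) • f ^ k

/-!
The Lefschetz decomposition writes `H` as the sum of the strings `N^j P_ℓ` (`j ≤ ℓ`) of the
primitive parts `P_ℓ = H_ℓ ∩ ker N^{ℓ+1}`. A primitive `p ∈ P_ℓ` is a highest-weight vector of
weight `ℓ` for the `sl₂`-triple, so `e^N p = e^X (N^ℓ p) / ℓ!` and hence `w p = N^ℓ p / ℓ!`;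
conjugating the exponentials gives `w N = -X w`, and therefore
`w (N^j p) = (-1)^j j! / (ℓ-j)! • N^{ℓ-j} p`. As `k` is graded and `N`-antisymmetric, distinct
strings are `h`-orthogonal, and on the string of `P_ℓ` the form
`h (N^j p) (N^j q) = j! / (ℓ-j)! * k p (N^ℓ q)` is a positive multiple of the polarization form
on `P_ℓ`. So `h` is symmetric positive definite exactly when every `k(·, N^ℓ ·)|_{P_ℓ}` is.
-/

open Module Finset

section RingIdentities

variable {A : Type*} [Ring A] [Algebra ℝ A]

omit [Algebra ℝ A] in
lemma mul_eq_mul_add_lie (a c : A) : a * c = c * a + ⁅a, c⁆ := by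
  rw [Ring.lie_def]; abel

lemma pow_add_two_mul {a b : A} (h : ⁅a, ⁅a, ⁅a, b⁆⁆⁆ = 0) (k : ℕ) :
    a ^ (k + 2) * b = b * a ^ (k + 2) + ((k : ℝ) + 2) • (⁅a, b⁆ * a ^ (k + 1)) +
      (((k : ℝ) + 2) * ((k : ℝ) + 1) / 2) • (⁅a, ⁅a, b⁆⁆ * a ^ k) := by
  have hb := mul_eq_mul_add_lie a b
  have hd := mul_eq_mul_add_lie a ⁅a, b⁆
  have he : a * ⁅a, ⁅a, b⁆⁆ = ⁅a, ⁅a, b⁆⁆ * a := by rw [mul_eq_mul_add_lie, h, add_zero]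
  induction k with
  | zero =>
    rw [pow_two, mul_assoc, hb, mul_add, ← mul_assoc, hb, hd]
    norm_num [add_mul, mul_assoc, two_smul]
    abel
  | succ k ih =>
    rw [pow_succ', mul_assoc, ih]
    simp only [mul_add, mul_smul_comm, ← mul_assoc, hb, hd, he, add_mul]
    simp only [mul_assoc, ← pow_succ']
    push_cast
    match_scalars <;> ring

lemma mul_pow_succ_of_lie {X N H : A} (hXN : ⁅X, N⁆ = H) (hNH : ⁅N, H⁆ = (2 : ℝ) • N) (t : ℕ) :
    X * N ^ (t + 1) =
      N ^ (t + 1) * X + ((t : ℝ) + 1) • (N ^ t * H) - (((t : ℝ) + 1) * t) • N ^ t := by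
  have hX : X * N = N * X + H := by rw [mul_eq_mul_add_lie, hXN]
  have hH : H * N = N * H - (2 : ℝ) • N := by rw [← hNH, Ring.lie_def]; abel
  induction t with
  | zero => simp [hX]
  | succ t ih =>
    rw [pow_succ _ (t + 1), ← mul_assoc, ih]
    simp only [sub_mul, add_mul, smul_mul_assoc, mul_assoc, hX, hH]
    simp only [mul_add, mul_sub, mul_smul_comm, ← mul_assoc, ← pow_succ]
    push_cast
    match_scalars <;> ring

noncomputable def truncExp (a : A) (n : ℕ) : A :=
  ∑ k ∈ range n, (k.factorial : ℝ)⁻¹ • a ^ k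

lemma truncExp_succ (a : A) (n : ℕ) :
    truncExp a (n + 1) = truncExp a n + (n.factorial : ℝ)⁻¹ • a ^ n :=
  sum_range_succ _ _

lemma truncExp_add_two_mul {a b : A} (h : ⁅a, ⁅a, ⁅a, b⁆⁆⁆ = 0) (n : ℕ) :
    truncExp a (n + 2) * b = b * truncExp a (n + 2) + ⁅a, b⁆ * truncExp a (n + 1) +
      (2⁻¹ : ℝ) • (⁅a, ⁅a, b⁆⁆ * truncExp a n) := by
  induction n with
  | zero =>
    simp [truncExp, sum_range_succ, add_mul, mul_add, mul_eq_mul_add_lie a b]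
    abel
  | succ n ih =>
    rw [truncExp_succ _ (n + 2), add_mul, ih, smul_mul_assoc, pow_add_two_mul h,
      truncExp_succ _ (n + 1), truncExp_succ _ n, Nat.factorial_succ (n + 1), Nat.factorial_succ n]
    simp only [mul_add, mul_smul_comm]
    push_cast
    match_scalars <;> field_simp <;> ring

end RingIdentities

section OrthogonalDecomposition

variable {ι : Type*} {S : ι → Submodule ℝ V} {B : V →ₗ[ℝ] V →ₗ[ℝ] ℝ}

lemma apply_comm_of_iSup_eq_top (hS : ⨆ i, S i = ⊤)
    (h : ∀ i j, ∀ x ∈ S i, ∀ y ∈ S j, B x y = B y x) (x y : V) : B x y = B y x := by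
  have hmem : ∀ z : V, z ∈ ⨆ i, S i := fun z => hS ▸ Submodule.mem_top
  refine Submodule.iSup_induction S (motive := fun x => B x y = B y x) (hmem x)
    (fun i x hx => ?_) (by simp) (fun x₁ x₂ h₁ h₂ => by simp [h₁, h₂])
  exact Submodule.iSup_induction S (motive := fun y => B x y = B y x) (hmem y)
    (fun j y hy => h i j x hx y hy) (by simp) (fun y₁ y₂ h₁ h₂ => by simp [h₁, h₂])

lemma apply_self_pos_of_iSup_eq_top (hS : ⨆ i, S i = ⊤)
    (horth : ∀ i j, i ≠ j → ∀ x ∈ S i, ∀ y ∈ S j, B x y = 0)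
    (hpos : ∀ i, ∀ x ∈ S i, x ≠ 0 → 0 < B x x) {x : V} (hx : x ≠ 0) : 0 < B x x := by
  classical
  obtain ⟨f, hf, rfl⟩ := (Submodule.mem_iSup_iff_exists_finsupp S x).1 (hS ▸ Submodule.mem_top)
  have hdiag : B (f.sum fun _ v => v) (f.sum fun _ v => v) = ∑ i ∈ f.support, B (f i) (f i) := by
    simp only [Finsupp.sum, map_sum, LinearMap.sum_apply]
    exact sum_congr rfl fun i hi =>
      sum_eq_single i (fun j _ hji => horth j i hji _ (hf j) _ (hf i)) (absurd hi)
  rw [hdiag]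
  refine sum_pos (fun i hi => hpos i _ (hf i) (Finsupp.mem_support_iff.1 hi)) ?_
  exact nonempty_iff_ne_empty.2 fun h => hx (by simp [Finsupp.sum, h])

end OrthogonalDecomposition

section Exponential

lemma expNil_eq_truncExp {f : Module.End ℝ V} (hf : f ^ finrank ℝ V = 0) {n : ℕ}
    (hn : finrank ℝ V ≤ n) : expNil f = truncExp f n := by
  have key : ∀ m, finrank ℝ V ≤ m → truncExp f m = truncExp f (finrank ℝ V) := fun m hm =>
    (sum_subset (range_subset_range.2 hm) fun k _ hk => by
      rw [pow_eq_zero_of_le (by simpa using hk) hf, smul_zero]).symm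
  rw [expNil, ← truncExp, key _ (Nat.le_succ _), key n hn]

lemma expNil_apply_eq_sum_range {f : Module.End ℝ V} (hf : f ^ finrank ℝ V = 0) {n : ℕ} {v : V}
    (hv : (f ^ n) v = 0) : expNil f v = ∑ k ∈ range n, (k.factorial : ℝ)⁻¹ • (f ^ k) v := by
  rw [expNil_eq_truncExp hf (Nat.le_add_left _ n), truncExp, LinearMap.sum_apply]
  refine (sum_subset (range_subset_range.2 (Nat.le_add_right _ _)) fun k _ hk => ?_).symm
  rw [LinearMap.smul_apply, Module.End.pow_map_zero_of_le (not_lt.1 (mem_range.not.1 hk)) hv,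
    smul_zero]

lemma expNil_mul_eq {a b : Module.End ℝ V} (ha : a ^ finrank ℝ V = 0)
    (h : ⁅a, ⁅a, ⁅a, b⁆⁆⁆ = 0) :
    expNil a * b = (b + ⁅a, b⁆ + (2⁻¹ : ℝ) • ⁅a, ⁅a, b⁆⁆) * expNil a := by
  have := truncExp_add_two_mul h (finrank ℝ V)
  rw [← expNil_eq_truncExp ha (by omega), ← expNil_eq_truncExp ha (by omega),
    ← expNil_eq_truncExp ha le_rfl] at this
  rw [this, add_mul, add_mul, smul_mul_assoc]

variable [FiniteDimensional ℝ V]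

lemma IsNilpotent.pow_finrank_eq_zero {f : Module.End ℝ V} (hf : IsNilpotent f) :
    f ^ finrank ℝ V = 0 := by
  simpa [hf.charpoly_eq_X_pow_finrank] using LinearMap.aeval_self_charpoly f

lemma expNil_neg_mul_expNil {f : Module.End ℝ V} (hf : IsNilpotent f) :
    expNil (-f) * expNil f = 1 := by
  -- Mathlib's `IsNilpotent.exp` is defined in `ℚ`-modules: let `ℚ` act on `End V` through `ℝ`.
  let _ : Module ℚ (Module.End ℝ V) := Module.compHom _ (algebraMap ℚ ℝ)
  have hexp : ∀ g : Module.End ℝ V, IsNilpotent g → expNil g = IsNilpotent.exp g := fun g hg => by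
    rw [IsNilpotent.exp_eq_sum (pow_eq_zero_of_le (Nat.le_succ _) hg.pow_finrank_eq_zero), expNil]
    refine sum_congr rfl fun k _ => ?_
    change _ = (algebraMap ℚ ℝ (k.factorial : ℚ)⁻¹) • g ^ k
    simp
  rw [hexp _ hf, hexp _ hf.neg, IsNilpotent.exp_neg_mul_exp_self hf]

end Exponential

noncomputable def weilElement (X N : Module.End ℝ V) : Module.End ℝ V :=
  expNil (-X) * expNil N * expNil (-X)

section Sl2

variable {X N H : Module.End ℝ V}

lemma apply_pow_succ_of_highestWeight (hXN : ⁅X, N⁆ = H) (hNH : ⁅N, H⁆ = (2 : ℝ) • N) {p : V}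
    {μ : ℝ} (hXp : X p = 0) (hHp : H p = μ • p) (j : ℕ) :
    X ((N ^ (j + 1)) p) = (((j : ℝ) + 1) * (μ - j)) • (N ^ j) p := by
  have := LinearMap.congr_fun (mul_pow_succ_of_lie hXN hNH j) p
  simp only [Module.End.mul_apply, LinearMap.sub_apply, LinearMap.add_apply,
    LinearMap.smul_apply, hXp, hHp, map_zero, map_smul] at this
  rw [this]
  module

lemma pow_add_two_apply_eq_zero (hXN : ⁅X, N⁆ = H) (hNH : ⁅N, H⁆ = (2 : ℝ) • N) {p : V} {ℓ : ℕ}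
    (hHp : H p = (ℓ : ℝ) • p) (hNp : (N ^ (ℓ + 1)) p = 0) : (N ^ (ℓ + 2)) (X p) = 0 := by
  have := LinearMap.congr_fun (mul_pow_succ_of_lie hXN hNH (ℓ + 1)) p
  simpa [hHp, hNp, Module.End.pow_map_zero_of_le (Nat.le_succ _) hNp] using this.symm

lemma pow_apply_pow_of_highestWeight (hXN : ⁅X, N⁆ = H) (hNH : ⁅N, H⁆ = (2 : ℝ) • N) {p : V}
    {ℓ : ℕ} (hXp : X p = 0) (hHp : H p = (ℓ : ℝ) • p) {m : ℕ} (hm : m ≤ ℓ) :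
    (X ^ m) ((N ^ ℓ) p) =
      ((ℓ.factorial : ℝ) * m.factorial / (ℓ - m).factorial) • (N ^ (ℓ - m)) p := by
  induction m with
  | zero => simp [(Nat.factorial_pos ℓ).ne']
  | succ m ih =>
    obtain ⟨a, rfl⟩ : ∃ a, ℓ = m + 1 + a := ⟨ℓ - (m + 1), by omega⟩
    rw [pow_succ', Module.End.mul_apply, ih (by omega), map_smul,
      show m + 1 + a - m = a + 1 by omega, show m + 1 + a - (m + 1) = a by omega,
      apply_pow_succ_of_highestWeight hXN hNH hXp hHp, smul_smul, Nat.factorial_succ a,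
      Nat.factorial_succ m]
    congr 1
    push_cast
    field_simp
    ring

lemma expNil_apply_pow_of_highestWeight (hX : X ^ finrank ℝ V = 0) (hN : N ^ finrank ℝ V = 0)
    (hXN : ⁅X, N⁆ = H) (hNH : ⁅N, H⁆ = (2 : ℝ) • N) {p : V} {ℓ : ℕ} (hXp : X p = 0)
    (hHp : H p = (ℓ : ℝ) • p) (hNp : (N ^ (ℓ + 1)) p = 0) :
    expNil X ((N ^ ℓ) p) = (ℓ.factorial : ℝ) • expNil N p := by
  have hXNp : (X ^ (ℓ + 1)) ((N ^ ℓ) p) = 0 := by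
    rw [pow_succ', Module.End.mul_apply, pow_apply_pow_of_highestWeight hXN hNH hXp hHp le_rfl,
      Nat.sub_self, pow_zero, Module.End.one_apply, map_smul, hXp, smul_zero]
  rw [expNil_apply_eq_sum_range hX hXNp, expNil_apply_eq_sum_range hN hNp, smul_sum,
    ← sum_range_reflect]
  refine sum_congr rfl fun m hm => ?_
  have hm : m ≤ ℓ := Nat.lt_succ_iff.1 (mem_range.1 hm)
  rw [Nat.add_sub_cancel, pow_apply_pow_of_highestWeight hXN hNH hXp hHp (Nat.sub_le ℓ m),
    Nat.sub_sub_self hm, smul_smul, smul_smul]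
  congr 1
  field_simp

variable [FiniteDimensional ℝ V]

lemma weilElement_apply_of_highestWeight (hX : IsNilpotent X) (hN : IsNilpotent N)
    (hXN : ⁅X, N⁆ = H) (hNH : ⁅N, H⁆ = (2 : ℝ) • N) {p : V} {ℓ : ℕ} (hXp : X p = 0)
    (hHp : H p = (ℓ : ℝ) • p) (hNp : (N ^ (ℓ + 1)) p = 0) :
    weilElement X N p = (ℓ.factorial : ℝ)⁻¹ • (N ^ ℓ) p := by
  have hfix : expNil (-X) p = p := by
    rw [expNil_apply_eq_sum_range hX.neg.pow_finrank_eq_zero (n := 1) (by simp [hXp])]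
    simp
  have hstring : expNil N p = (ℓ.factorial : ℝ)⁻¹ • expNil X ((N ^ ℓ) p) := by
    rw [expNil_apply_pow_of_highestWeight hX.pow_finrank_eq_zero hN.pow_finrank_eq_zero hXN hNH
      hXp hHp hNp, smul_smul, inv_mul_cancel₀ (by positivity), one_smul]
  rw [weilElement, Module.End.mul_apply, hfix, Module.End.mul_apply, hstring, map_smul,
    ← Module.End.mul_apply, expNil_neg_mul_expNil hX, Module.End.one_apply]

section

attribute [local instance] LieRing.ofAssociativeRing

lemma weilElement_mul (hX : IsNilpotent X) (hN : IsNilpotent N) (hXN : ⁅X, N⁆ = H)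
    (hXH : ⁅X, H⁆ = (-2 : ℝ) • X) (hNH : ⁅N, H⁆ = (2 : ℝ) • N) :
    weilElement X N * N = -X * weilElement X N := by
  have hX' := hX.neg.pow_finrank_eq_zero
  have hNX : ⁅N, X⁆ = -H := by rw [← lie_skew, hXN]
  have h1 : expNil (-X) * N = (N - H - X) * expNil (-X) := by
    rw [expNil_mul_eq hX' (by simp [hXN, hXH])]
    congr 1
    simp [hXN, hXH]
    module
  have h2 : expNil N * (N - H - X) = -X * expNil N := by
    rw [expNil_mul_eq hN.pow_finrank_eq_zero (by simp [hNH, hNX])]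
    congr 1
    simp [hNH, hNX]
    module
  have h3 : expNil (-X) * -X = -X * expNil (-X) := by
    rw [expNil_mul_eq hX' (by simp)]
    simp
  calc weilElement X N * N = expNil (-X) * (expNil N * (N - H - X)) * expNil (-X) := by
        simp only [weilElement, mul_assoc, h1]
    _ = -X * weilElement X N := by
        rw [h2, ← mul_assoc, h3]
        simp only [weilElement, mul_assoc]

end

lemma weilElement_apply_pow_of_highestWeight (hX : IsNilpotent X) (hN : IsNilpotent N)
    (hXN : ⁅X, N⁆ = H) (hXH : ⁅X, H⁆ = (-2 : ℝ) • X) (hNH : ⁅N, H⁆ = (2 : ℝ) • N) {p : V}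
    {ℓ : ℕ} (hXp : X p = 0) (hHp : H p = (ℓ : ℝ) • p) (hNp : (N ^ (ℓ + 1)) p = 0) {j : ℕ}
    (hj : j ≤ ℓ) :
    weilElement X N ((N ^ j) p) =
      ((-1) ^ j * (j.factorial : ℝ) / (ℓ - j).factorial) • (N ^ (ℓ - j)) p := by
  have hw : weilElement X N * N ^ j = (-X) ^ j * weilElement X N :=
    SemiconjBy.pow_right (weilElement_mul hX hN hXN hXH hNH) j
  rw [← Module.End.mul_apply, hw, Module.End.mul_apply,
    weilElement_apply_of_highestWeight hX hN hXN hNH hXp hHp hNp, ← neg_one_smul ℝ X, smul_pow,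
    LinearMap.smul_apply, map_smul, pow_apply_pow_of_highestWeight hXN hNH hXp hHp hj, smul_smul,
    smul_smul]
  congr 1
  field_simp

end Sl2

section Grading

variable {grading : ℤ → Submodule ℝ V}

lemma pow_apply_mem_of_map_le {f : Module.End ℝ V} {d : ℤ}
    (hf : ∀ ℓ, (grading ℓ).map f ≤ grading (ℓ + d)) {ℓ : ℤ} {v : V} (hv : v ∈ grading ℓ) (j : ℕ) :
    (f ^ j) v ∈ grading (ℓ + j * d) := by
  induction j with
  | zero => simpa using hv
  | succ j ih =>
    rw [pow_succ', Module.End.mul_apply, Nat.cast_succ, add_one_mul, ← add_assoc]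
    exact hf _ ⟨_, ih, rfl⟩

lemma grading_eq_eigenspace (hgrad : DirectSum.IsInternal grading) {H : Module.End ℝ V}
    (hH : ∀ ℓ : ℤ, ∀ v ∈ grading ℓ, H v = (ℓ : ℝ) • v) (ℓ : ℤ) :
    grading ℓ = H.eigenspace (ℓ : ℝ) := by
  have hle : ∀ ℓ : ℤ, grading ℓ ≤ H.eigenspace (ℓ : ℝ) := fun ℓ v hv =>
    Module.End.mem_eigenspace_iff.2 (hH ℓ v hv)
  exact congr_fun (((H.eigenspaces_iSupIndep.comp Int.cast_injective).le_iff_eq_of_iSup_eq_top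
    hgrad.submodule_iSup_eq_top).1 hle) ℓ

lemma map_le_of_lie_eq_neg_smul (hgrad : DirectSum.IsInternal grading) {H X : Module.End ℝ V}
    (hH : ∀ ℓ : ℤ, ∀ v ∈ grading ℓ, H v = (ℓ : ℝ) • v) {d : ℤ} (hXH : ⁅X, H⁆ = (-d : ℝ) • X)
    (ℓ : ℤ) : (grading ℓ).map X ≤ grading (ℓ + d) := by
  rw [Submodule.map_le_iff_le_comap]
  intro v hv
  rw [grading_eq_eigenspace hgrad hH, Module.End.mem_eigenspace_iff] at hv
  rw [Submodule.mem_comap, grading_eq_eigenspace hgrad hH, Module.End.mem_eigenspace_iff]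
  have := LinearMap.congr_fun hXH v
  rw [Ring.lie_def, LinearMap.sub_apply, Module.End.mul_apply, Module.End.mul_apply, hv,
    map_smul, LinearMap.smul_apply] at this
  push_cast
  linear_combination (norm := module) -this

variable [FiniteDimensional ℝ V]

lemma exists_grading_eq_bot (hgrad : DirectSum.IsInternal grading) :
    ∃ B : ℕ, ∀ ℓ : ℤ, (B : ℤ) < |ℓ| → grading ℓ = ⊥ := by
  obtain ⟨B, hB⟩ := ((WellFoundedGT.finite_ne_bot_of_iSupIndep
    hgrad.submodule_iSupIndep).image Int.natAbs).bddAbove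
  refine ⟨B, fun ℓ hℓ => by_contra fun hne => ?_⟩
  have := hB ⟨ℓ, hne, rfl⟩
  rw [Int.abs_eq_natAbs] at hℓ
  omega

lemma isNilpotent_of_map_le (hgrad : DirectSum.IsInternal grading) {f : Module.End ℝ V} {d : ℤ}
    (hd : 0 < d) (hf : ∀ ℓ, (grading ℓ).map f ≤ grading (ℓ + d)) : IsNilpotent f := by
  obtain ⟨B, hB⟩ := exists_grading_eq_bot hgrad
  refine ⟨2 * B + 1, LinearMap.ker_eq_top.1 (eq_top_iff.2 ?_)⟩
  rw [← hgrad.submodule_iSup_eq_top]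
  refine iSup_le fun ℓ v hv => ?_
  by_cases hℓ : (B : ℤ) < |ℓ|
  · rw [hB ℓ hℓ] at hv
    simp [(Submodule.mem_bot ℝ).1 hv]
  · have hfar : grading (ℓ + ((2 * B + 1 : ℕ) : ℤ) * d) = ⊥ := by
      refine hB _ (lt_abs.2 (Or.inl ?_))
      have : ((2 * B + 1 : ℕ) : ℤ) ≤ ((2 * B + 1 : ℕ) : ℤ) * d :=
        le_mul_of_one_le_right (by positivity) hd
      push_cast at this ⊢
      linarith [(abs_le.1 (not_lt.1 hℓ)).1]
    have := pow_apply_mem_of_map_le hf hv (2 * B + 1)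
    rwa [hfar, Submodule.mem_bot] at this

end Grading

section Lefschetz

variable {grading : ℤ → Submodule ℝ V} {N : Module.End ℝ V}

def primitivePart (grading : ℤ → Submodule ℝ V) (N : Module.End ℝ V) (ℓ : ℕ) : Submodule ℝ V :=
  grading ℓ ⊓ LinearMap.ker (N ^ (ℓ + 1))

lemma apply_eq_zero_of_mem_primitivePart (hgrad : DirectSum.IsInternal grading)
    {X H : Module.End ℝ V} (hH : ∀ ℓ : ℤ, ∀ v ∈ grading ℓ, H v = (ℓ : ℝ) • v)
    (hXN : ⁅X, N⁆ = H) (hXH : ⁅X, H⁆ = (-2 : ℝ) • X) (hNH : ⁅N, H⁆ = (2 : ℝ) • N)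
    (hinj : ∀ ℓ : ℕ, 1 ≤ ℓ → ∀ u ∈ grading ℓ, (N ^ ℓ) u = 0 → u = 0) {ℓ : ℕ} {p : V}
    (hp : p ∈ primitivePart grading N ℓ) : X p = 0 := by
  have hXp : X p ∈ grading ((ℓ + 2 : ℕ) : ℤ) := by
    have := map_le_of_lie_eq_neg_smul hgrad hH (d := 2) (by rw [hXH]; norm_num) ℓ ⟨p, hp.1, rfl⟩
    simpa using this
  exact hinj (ℓ + 2) (by omega) _ hXp
    (pow_add_two_apply_eq_zero hXN hNH (by simpa using hH ℓ p hp.1) hp.2)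

lemma pow_apply_mem_iSup_map_primitivePart {u : V}
    (hu : u ∈ ⨆ σ : ℕ × ℕ, (primitivePart grading N σ.1).map (N ^ σ.2)) (j : ℕ) :
    (N ^ j) u ∈ ⨆ σ : ℕ × ℕ, (primitivePart grading N σ.1).map (N ^ σ.2) := by
  refine Submodule.iSup_induction _ (motive := fun u => (N ^ j) u ∈ _) hu ?_ (by simp)
    fun u₁ u₂ h₁ h₂ => by rw [map_add]; exact add_mem h₁ h₂
  rintro σ _ ⟨p, hp, rfl⟩
  exact Submodule.mem_iSup_of_mem (σ.1, j + σ.2) ⟨p, hp, by rw [pow_add, Module.End.mul_apply]⟩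

variable [FiniteDimensional ℝ V]

lemma grading_le_iSup_map_primitivePart (hgrad : DirectSum.IsInternal grading)
    (hdeg : ∀ ℓ : ℤ, (grading ℓ).map N ≤ grading (ℓ - 2))
    (hsurj : ∀ ℓ : ℕ, 1 ≤ ℓ → ∀ v ∈ grading (-(ℓ : ℤ)), ∃ u ∈ grading (ℓ : ℤ), (N ^ ℓ) u = v)
    (m : ℕ) : grading m ≤ ⨆ σ : ℕ × ℕ, (primitivePart grading N σ.1).map (N ^ σ.2) := by
  have hdeg' : ∀ ℓ, (grading ℓ).map N ≤ grading (ℓ + -2) := by simpa only [← sub_eq_add_neg]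
  obtain ⟨B, hB⟩ := exists_grading_eq_bot hgrad
  -- Descending induction on `m`, starting above the top degree `B`: if `u ∈ H_{m+2}` is a
  -- preimage of `N^{m+1} v` under `N^{m+2}`, then `v - N u` is primitive.
  suffices ∀ d m : ℕ, B < m + d → grading m ≤ ⨆ σ : ℕ × ℕ,
      (primitivePart grading N σ.1).map (N ^ σ.2) from this (B + 1) m (by omega)
  intro d
  induction d with
  | zero =>
    intro m hm
    rw [hB m (by simpa using hm)]
    exact bot_le
  | succ d ih =>
    intro m hm v hv
    obtain ⟨u, hu, huv⟩ := hsurj (m + 2) (by omega) ((N ^ (m + 1)) v) (by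
      convert pow_apply_mem_of_map_le hdeg' hv (m + 1) using 2; push_cast; ring)
    have hNu : N u ∈ grading m := by convert hdeg' _ ⟨u, hu, rfl⟩ using 2; push_cast; ring
    have hprim : v - N u ∈ primitivePart grading N m := by
      refine Submodule.mem_inf.2 ⟨sub_mem hv hNu, LinearMap.mem_ker.2 ?_⟩
      rw [map_sub, ← Module.End.mul_apply, ← pow_succ, huv, sub_self]
    rw [← sub_add_cancel v (N u)]
    exact add_mem (Submodule.mem_iSup_of_mem (m, 0) ⟨_, hprim, by simp⟩)
      (by simpa using pow_apply_mem_iSup_map_primitivePart (ih (m + 2) (by omega) hu) 1)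

lemma iSup_map_primitivePart_eq_top (hgrad : DirectSum.IsInternal grading)
    (hdeg : ∀ ℓ : ℤ, (grading ℓ).map N ≤ grading (ℓ - 2))
    (hsurj : ∀ ℓ : ℕ, 1 ≤ ℓ → ∀ v ∈ grading (-(ℓ : ℤ)), ∃ u ∈ grading (ℓ : ℤ), (N ^ ℓ) u = v) :
    ⨆ σ : ℕ × ℕ, (primitivePart grading N σ.1).map (N ^ σ.2) = ⊤ := by
  rw [eq_top_iff, ← hgrad.submodule_iSup_eq_top]
  refine iSup_le fun ℓ => ?_
  obtain ⟨m, rfl | rfl⟩ := Int.eq_nat_or_neg ℓ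
  · exact grading_le_iSup_map_primitivePart hgrad hdeg hsurj m
  · rcases Nat.eq_zero_or_pos m with rfl | hm
    · exact grading_le_iSup_map_primitivePart hgrad hdeg hsurj 0
    intro v hv
    obtain ⟨u, hu, rfl⟩ := hsurj m hm v hv
    exact pow_apply_mem_iSup_map_primitivePart
      (grading_le_iSup_map_primitivePart hgrad hdeg hsurj m hu) m

end Lefschetz

section Pairing

variable {grading : ℤ → Submodule ℝ V} {N : Module.End ℝ V} {k : V →ₗ[ℝ] V →ₗ[ℝ] ℝ}

lemma apply_pow_apply_eq (hkinf : ∀ x y : V, k (N x) y + k x (N y) = 0) (a : ℕ) (x y : V) :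
    k ((N ^ a) x) y = (-1) ^ a * k x ((N ^ a) y) := by
  induction a generalizing x with
  | zero => simp
  | succ a ih =>
    calc k ((N ^ (a + 1)) x) y = (-1) ^ a * k (N x) ((N ^ a) y) := by
          rw [pow_succ, Module.End.mul_apply, ih]
      _ = (-1) ^ (a + 1) * k x ((N ^ (a + 1)) y) := by
          rw [eq_neg_of_add_eq_zero_left (hkinf x _), pow_succ' N, Module.End.mul_apply]
          ring

lemma eq_of_apply_pow_primitivePart_ne_zero
    (hdeg : ∀ ℓ : ℤ, (grading ℓ).map N ≤ grading (ℓ - 2))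
    (hkgraded : ∀ ℓ m : ℤ, ℓ + m ≠ 0 → ∀ x ∈ grading ℓ, ∀ y ∈ grading m, k x y = 0)
    (hkinf : ∀ x y : V, k (N x) y + k x (N y) = 0) {ℓ m : ℕ} {p q : V}
    (hp : p ∈ primitivePart grading N ℓ) (hq : q ∈ primitivePart grading N m) {a b : ℕ}
    (h : k ((N ^ a) p) ((N ^ b) q) ≠ 0) : ℓ = m ∧ a + b = ℓ := by
  -- The degrees force `2 (a + b) = ℓ + m`; moving all the powers of `N` onto `p` (resp. `q`)
  -- shows `a + b ≤ ℓ` (resp. `a + b ≤ m`).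
  have hdeg' : ∀ ℓ, (grading ℓ).map N ≤ grading (ℓ + -2) := by simpa only [← sub_eq_add_neg]
  have hsum : (ℓ : ℤ) + a * -2 + ((m : ℤ) + b * -2) = 0 := by_contra fun hne =>
    h (hkgraded _ _ hne _ (pow_apply_mem_of_map_le hdeg' hp.1 a) _
      (pow_apply_mem_of_map_le hdeg' hq.1 b))
  have hℓ : a + b ≤ ℓ := by
    by_contra hlt
    apply h
    rw [← mul_right_inj' (pow_ne_zero b (neg_ne_zero.2 one_ne_zero) : ((-1 : ℝ)) ^ b ≠ 0),
      ← apply_pow_apply_eq hkinf, ← Module.End.mul_apply, ← pow_add,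
      Module.End.pow_map_zero_of_le (by omega) hp.2]
    simp
  have hm : a + b ≤ m := by
    by_contra hlt
    apply h
    rw [apply_pow_apply_eq hkinf, ← Module.End.mul_apply, ← pow_add,
      Module.End.pow_map_zero_of_le (by omega) hq.2]
    simp
  omega

-- `hw` is the action of the Weil element on the Lefschetz strings, see
-- `weilElement_apply_pow_of_highestWeight`.
variable {w : Module.End ℝ V}
  (hw : ∀ ℓ, ∀ p ∈ primitivePart grading N ℓ, ∀ j ≤ ℓ,
    w ((N ^ j) p) = ((-1) ^ j * (j.factorial : ℝ) / (ℓ - j).factorial) • (N ^ (ℓ - j)) p)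
include hw

lemma apply_pow_weil_apply_pow (hkinf : ∀ x y : V, k (N x) y + k x (N y) = 0)
    {ℓ : ℕ} {p q : V} (hq : q ∈ primitivePart grading N ℓ) {j : ℕ} (hj : j ≤ ℓ) :
    k ((N ^ j) p) (w ((N ^ j) q)) = ((j.factorial : ℝ) / (ℓ - j).factorial) * k p ((N ^ ℓ) q) := by
  rw [hw ℓ q hq j hj, map_smul, smul_eq_mul, apply_pow_apply_eq hkinf, ← Module.End.mul_apply,
    ← pow_add, Nat.add_sub_cancel' hj]
  have : ((-1 : ℝ) ^ j) * (-1) ^ j = 1 := by rw [← mul_pow]; norm_num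
  linear_combination ((j.factorial : ℝ) / (ℓ - j).factorial * k p ((N ^ ℓ) q)) * this

lemma apply_weil_eq_zero_of_ne (hdeg : ∀ ℓ : ℤ, (grading ℓ).map N ≤ grading (ℓ - 2))
    (hkgraded : ∀ ℓ m : ℤ, ℓ + m ≠ 0 → ∀ x ∈ grading ℓ, ∀ y ∈ grading m, k x y = 0)
    (hkinf : ∀ x y : V, k (N x) y + k x (N y) = 0) {σ τ : ℕ × ℕ} (hστ : σ ≠ τ) {x y : V}
    (hx : x ∈ (primitivePart grading N σ.1).map (N ^ σ.2))
    (hy : y ∈ (primitivePart grading N τ.1).map (N ^ τ.2)) : k x (w y) = 0 := by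
  obtain ⟨p, hp, rfl⟩ := hx
  obtain ⟨q, hq, rfl⟩ := hy
  by_cases hj : τ.2 ≤ τ.1
  · rw [hw _ q hq _ hj, map_smul, smul_eq_mul]
    refine mul_eq_zero_of_right _ (by_contra fun h => hστ ?_)
    obtain ⟨h₁, h₂⟩ := eq_of_apply_pow_primitivePart_ne_zero hdeg hkgraded hkinf hp hq h
    ext <;> omega
  · rw [Module.End.pow_map_zero_of_le (by omega) hq.2, map_zero, map_zero]

lemma apply_weil_comm (hdeg : ∀ ℓ : ℤ, (grading ℓ).map N ≤ grading (ℓ - 2))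
    (hkgraded : ∀ ℓ m : ℤ, ℓ + m ≠ 0 → ∀ x ∈ grading ℓ, ∀ y ∈ grading m, k x y = 0)
    (hkinf : ∀ x y : V, k (N x) y + k x (N y) = 0)
    (hsymm : ∀ ℓ, ∀ x ∈ primitivePart grading N ℓ, ∀ y ∈ primitivePart grading N ℓ,
      k x ((N ^ ℓ) y) = k y ((N ^ ℓ) x))
    (σ τ : ℕ × ℕ) (x : V) (hx : x ∈ (primitivePart grading N σ.1).map (N ^ σ.2))
    (y : V) (hy : y ∈ (primitivePart grading N τ.1).map (N ^ τ.2)) : k x (w y) = k y (w x) := by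
  by_cases hστ : σ = τ
  · subst hστ
    obtain ⟨p, hp, rfl⟩ := hx
    obtain ⟨q, hq, rfl⟩ := hy
    by_cases hj : σ.2 ≤ σ.1
    · rw [apply_pow_weil_apply_pow hw hkinf hq hj,
        apply_pow_weil_apply_pow hw hkinf hp hj, hsymm _ p hp q hq]
    · simp [Module.End.pow_map_zero_of_le (not_le.1 hj) hp.2]
  · rw [apply_weil_eq_zero_of_ne hw hdeg hkgraded hkinf hστ hx hy,
      apply_weil_eq_zero_of_ne hw hdeg hkgraded hkinf (Ne.symm hστ) hy hx]

lemma apply_weil_self_pos (hkinf : ∀ x y : V, k (N x) y + k x (N y) = 0)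
    (hpos : ∀ ℓ, ∀ x ∈ primitivePart grading N ℓ, x ≠ 0 → 0 < k x ((N ^ ℓ) x))
    (σ : ℕ × ℕ) (x : V) (hx : x ∈ (primitivePart grading N σ.1).map (N ^ σ.2)) (hx0 : x ≠ 0) :
    0 < k x (w x) := by
  obtain ⟨p, hp, rfl⟩ := hx
  have hj : σ.2 ≤ σ.1 := by
    by_contra hj
    exact hx0 (Module.End.pow_map_zero_of_le (not_le.1 hj) hp.2)
  rw [apply_pow_weil_apply_pow hw hkinf hp hj]
  exact mul_pos (by positivity) (hpos _ p hp fun hp0 => hx0 (by simp [hp0]))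

end Pairing

/-- Let `(H, N)` be a graded Lefschetz structure (finite-dimensional
`ℤ`-graded real vector space `H = ⊕ H_ℓ`, `N` nilpotent of degree `-2` with
`N^ℓ : H_ℓ ≃ H_{-ℓ}` for `ℓ ≥ 1`), with canonical `sl(2,ℝ)`-representation given by the
triple `(X, N, Hop)`, and Weil element `w := e^{-X} e^{N} e^{-X}`. A graded bilinear
form `k` satisfying `k(Nx,y) + k(x,Ny) = 0` is a polarization — i.e. for every
`ℓ ≥ 0` the form `k(·, N^ℓ ·)` restricted to the primitive part
`P_ℓ = H_ℓ ∩ ker N^{ℓ+1}` is symmetric positive definite — if and only if the bilinear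
form `h(x,y) := k(x, w y)` is symmetric positive definite on `H`. -/
theorem polarization_iff_weil_posdef [FiniteDimensional ℝ V]
    (grading : ℤ → Submodule ℝ V) (hgrad : DirectSum.IsInternal grading)
    (N : Module.End ℝ V) (hnil : IsNilpotent N)
    (hdeg : ∀ ℓ : ℤ, (grading ℓ).map N ≤ grading (ℓ - 2))
    (hlef : ∀ ℓ : ℕ, 1 ≤ ℓ →
      (∀ u ∈ grading (ℓ : ℤ), (N ^ ℓ) u = 0 → u = 0) ∧
      (∀ v ∈ grading (-(ℓ : ℤ)), ∃ u ∈ grading (ℓ : ℤ), (N ^ ℓ) u = v))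
    (X Hop : Module.End ℝ V)
    (hXY : ⁅X, N⁆ = Hop) (hXH : ⁅X, Hop⁆ = (-2 : ℝ) • X)
    (hYH : ⁅N, Hop⁆ = (2 : ℝ) • N)
    (hH : ∀ ℓ : ℤ, ∀ v ∈ grading ℓ, Hop v = (ℓ : ℝ) • v)
    (k : V →ₗ[ℝ] V →ₗ[ℝ] ℝ)
    (hkgraded : ∀ ℓ m : ℤ, ℓ + m ≠ 0 → ∀ x ∈ grading ℓ, ∀ y ∈ grading m, k x y = 0)
    (hkinf : ∀ x y : V, k (N x) y + k x (N y) = 0) :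
    (∀ ℓ : ℕ,
      (∀ x ∈ grading (ℓ : ℤ) ⊓ LinearMap.ker (N ^ (ℓ + 1)),
        ∀ y ∈ grading (ℓ : ℤ) ⊓ LinearMap.ker (N ^ (ℓ + 1)),
          k x ((N ^ ℓ) y) = k y ((N ^ ℓ) x)) ∧
      (∀ x ∈ grading (ℓ : ℤ) ⊓ LinearMap.ker (N ^ (ℓ + 1)), x ≠ 0 →
        0 < k x ((N ^ ℓ) x))) ↔
    ((∀ x y : V, k x ((expNil (-X) * expNil N * expNil (-X)) y) =
        k y ((expNil (-X) * expNil N * expNil (-X)) x)) ∧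
      (∀ x : V, x ≠ 0 → 0 < k x ((expNil (-X) * expNil N * expNil (-X)) x))) := by
  have hX : IsNilpotent X :=
    isNilpotent_of_map_le hgrad two_pos (map_le_of_lie_eq_neg_smul hgrad hH (by rw [hXH]; norm_num))
  have hw : ∀ ℓ, ∀ p ∈ primitivePart grading N ℓ, ∀ j ≤ ℓ, weilElement X N ((N ^ j) p) =
      ((-1) ^ j * (j.factorial : ℝ) / (ℓ - j).factorial) • (N ^ (ℓ - j)) p := fun ℓ p hp j hj =>
    weilElement_apply_pow_of_highestWeight hX hnil hXY hXH hYH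
      (apply_eq_zero_of_mem_primitivePart hgrad hH hXY hXH hYH (fun ℓ hℓ => (hlef ℓ hℓ).1) hp)
      (by simpa using hH ℓ p hp.1) hp.2 hj
  have hspan := iSup_map_primitivePart_eq_top hgrad hdeg (fun ℓ hℓ => (hlef ℓ hℓ).2)
  constructor
  · intro hpol
    exact ⟨apply_comm_of_iSup_eq_top (B := k.compl₂ (weilElement X N)) hspan
        (apply_weil_comm hw hdeg hkgraded hkinf fun ℓ => (hpol ℓ).1),
      fun x hx => apply_self_pos_of_iSup_eq_top (B := k.compl₂ (weilElement X N)) hspan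
        (fun σ τ hστ x hx y hy => apply_weil_eq_zero_of_ne hw hdeg hkgraded hkinf hστ hx hy)
        (apply_weil_self_pos hw hkinf fun ℓ => (hpol ℓ).2) hx⟩
  · rintro ⟨hsymm, hpos⟩ ℓ
    rw [← weilElement] at hsymm hpos
    have hP : ∀ x, ∀ y ∈ primitivePart grading N ℓ,
        k x (weilElement X N y) = (ℓ.factorial : ℝ)⁻¹ * k x ((N ^ ℓ) y) := fun x y hy => by
      simpa using apply_pow_weil_apply_pow hw hkinf (p := x) hy (Nat.zero_le ℓ)
    have hc : (0 : ℝ) < (ℓ.factorial : ℝ)⁻¹ := by positivity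
    refine ⟨fun x hx y hy => ?_, fun x hx hx0 => ?_⟩
    · simpa [hP x y hy, hP y x hx, hc.ne'] using hsymm x y
    · exact pos_of_mul_pos_right (hP x x hx ▸ hpos x hx0) hc.le
end
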